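/- arXiv:cs/0703003 — 3 statements merged into one kernel-verified Lean document; each statement's English description precedes it below -/
import Mathlib

section
/- Let p, q be integers with 0 ≤ p < q, r = p/q, and let p_i, frac_i be defined by p_0 = p, frac_0 = 0, b_{i+1} = 1 if 2·p_i ≥ q else 0, p_{i+1} = 2·p_i − b_{i+1}·q, frac_{i+1} = frac_i + b_{i+1}·2^(−(i+1)). Then for every i, frac_i = ⌊2^i · r⌋ / 2^i; that is, frac_i is the greatest integer multiple of 2^(−i) that is not greater than r. -/
theorem rat_to_binary_frac_is_floor
    (p q : ℤ) (hp : 0 ≤ p) (hpq : p < q)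
    (P : ℕ → ℤ) (F : ℕ → ℚ)
    (hP0 : P 0 = p) (hF0 : F 0 = 0)
    (hP : ∀ i : ℕ, P (i + 1) = 2 * P i - (if q ≤ 2 * P i then 1 else 0) * q)
    (hF : ∀ i : ℕ, F (i + 1) = F i + (if q ≤ 2 * P i then 1 else 0) * ((2 : ℚ) ^ (i + 1))⁻¹) :
    ∀ i : ℕ, F i = (⌊(2 : ℚ) ^ i * ((p : ℚ) / (q : ℚ))⌋ : ℚ) / (2 : ℚ) ^ i := by
  have hq : 0 < q := lt_of_le_of_lt hp hpq
  have key : ∀ i : ℕ, ∃ n : ℤ, F i = (n : ℚ) / 2 ^ i ∧ P i = 2 ^ i * p - n * q ∧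
      0 ≤ P i ∧ P i < q := by
    intro i
    induction i with
    | zero => exact ⟨0, by simp [hF0], by simp [hP0], by simpa [hP0], by simpa [hP0]⟩
    | succ i ih =>
      obtain ⟨n, hFn, hPn, hP0i, hPlt⟩ := ih
      by_cases hb : q ≤ 2 * P i
      · refine ⟨2 * n + 1, ?_, ?_, ?_, ?_⟩
        · rw [hF i, hFn, if_pos hb]
          push_cast
          field_simp
          ring
        · rw [hP i, if_pos hb, hPn]; ring
        · rw [hP i, if_pos hb]; linarith
        · rw [hP i, if_pos hb]; linarith
      · refine ⟨2 * n, ?_, ?_, ?_, ?_⟩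
        · rw [hF i, hFn, if_neg hb]
          push_cast
          field_simp
          ring
        · rw [hP i, if_neg hb, hPn]; ring
        · rw [hP i, if_neg hb]; linarith
        · rw [hP i, if_neg hb]; linarith [not_le.mp hb]
    
  intro i
  obtain ⟨n, hFn, hPn, hP0i, hPlt⟩ := key i
  have hqQ : (0 : ℚ) < (q : ℚ) := by exact_mod_cast hq
  have hfloor : ⌊(2 : ℚ) ^ i * ((p : ℚ) / (q : ℚ))⌋ = n := by
    rw [Int.floor_eq_iff]
    have heq : (2 : ℚ) ^ i * ((p : ℚ) / (q : ℚ)) = n + (P i : ℚ) / q := by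
      have : (P i : ℚ) = 2 ^ i * p - n * q := by exact_mod_cast hPn
      field_simp
      linarith [this]
    constructor
    · rw [heq]
      have : (0:ℚ) ≤ (P i : ℚ) / q := div_nonneg (by exact_mod_cast hP0i) hqQ.le
      linarith
    · rw [heq]
      have : (P i : ℚ) / q < 1 := by
        rw [div_lt_one hqQ]; exact_mod_cast hPlt
      linarith
  rw [hfloor, hFn]
end

section
/- Let p, q be integers with 0 ≤ p < q, r = p/q, and let p_i, frac_i be defined by p_0 = p, frac_0 = 0, b_{i+1} = 1 if 2·p_i ≥ q else 0, p_{i+1} = 2·p_i − b_{i+1}·q, frac_{i+1} = frac_i + b_{i+1}·2^(−(i+1)). Then for every i: if p_i = 0 then frac_i = r, and if p_i > 0 then 0 < r − frac_i ≤ 2^(−i). -/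
theorem rat_to_binary_exit_assertion
    (p q : ℤ) (hp : 0 ≤ p) (hpq : p < q)
    (P : ℕ → ℤ) (F : ℕ → ℚ)
    (hP0 : P 0 = p) (hF0 : F 0 = 0)
    (hP : ∀ i : ℕ, P (i + 1) = 2 * P i - (if q ≤ 2 * P i then 1 else 0) * q)
    (hF : ∀ i : ℕ, F (i + 1) = F i + (if q ≤ 2 * P i then 1 else 0) * ((2 : ℚ) ^ (i + 1))⁻¹) :
    ∀ i : ℕ,
      (P i = 0 → F i = (p : ℚ) / (q : ℚ)) ∧
      (0 < P i → 0 < (p : ℚ) / (q : ℚ) - F i ∧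
        (p : ℚ) / (q : ℚ) - F i ≤ ((2 : ℚ) ^ i)⁻¹) := by
  have hq : (0 : ℤ) < q := lt_of_le_of_lt hp hpq
  have hqQ : (0 : ℚ) < (q : ℚ) := by exact_mod_cast hq
  -- main invariant
  have inv : ∀ i : ℕ, 0 ≤ P i ∧ P i < q ∧
      (p : ℚ) / (q : ℚ) - F i = (P i : ℚ) / ((q : ℚ) * 2 ^ i) := by
    intro i
    induction i with
    | zero =>
      refine ⟨hP0 ▸ hp, hP0 ▸ hpq, ?_⟩
      simp [hP0, hF0]
    | succ n ih =>
      obtain ⟨h0, h1, h2⟩ := ih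
      rw [hP n, hF n]
      by_cases hb : q ≤ 2 * P n
      · simp only [hb, if_true]
        refine ⟨by linarith, by linarith, ?_⟩
        have hFn : F n = (p : ℚ) / (q : ℚ) - (P n : ℚ) / ((q : ℚ) * 2 ^ n) := by
          linarith
        rw [hFn]; push_cast; field_simp; ring
      · simp only [hb, if_false]
        refine ⟨by linarith, by push_neg at hb; linarith, ?_⟩
        have hFn : F n = (p : ℚ) / (q : ℚ) - (P n : ℚ) / ((q : ℚ) * 2 ^ n) := by
          linarith
        rw [hFn]; push_cast; field_simp; ring
  intro i
  obtain ⟨h0, h1, h2⟩ := inv i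
  constructor
  · intro hz
    rw [hz] at h2
    simp at h2
    linarith
  · intro hpos
    have hposQ : (0 : ℚ) < (P i : ℚ) := by exact_mod_cast hpos
    have h1Q : (P i : ℚ) < (q : ℚ) := by exact_mod_cast h1
    have h2pow : (0 : ℚ) < (2 : ℚ) ^ i := by positivity
    constructor
    · rw [h2]; positivity
    · rw [h2]
      rw [div_le_iff₀ (by positivity)]
      rw [inv_mul_eq_div, le_div_iff₀ h2pow] -- (1/2^i) * (q*2^i) ≥ P i
      nlinarith
end

section
/- For every integer e and all natural numbers M, s with 0 ≤ M < 10^s, there exist an integer e′ and natural numbers M′, s′ with 0 ≤ M′ < 10^{s′} such that 10^e · (M / 10^s) = 2^{e′} · (M′ / 10^{s′}). That is, every number expressible as a power of ten times a finite decimal fraction in [0,1) is also expressible as a power of two times a finite decimal fraction in [0,1). -/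
/-!
Since `10 ^ t = 2 ^ t * 5 ^ t`, a decimal fraction `N / 10 ^ k` equals `2 ^ t * (N * 5 ^ t) / 10 ^ (k + t)`
for every `t`, and the new mantissa lies in `[0, 1)` as soon as `N < 2 ^ t`, e.g. for `t = N`.
-/

lemma exists_ten_zpow_mul_div_eq_div (e : ℤ) (M s : ℕ) :
    ∃ N k : ℕ, (10 : ℚ) ^ e * ((M : ℚ) / 10 ^ s) = (N : ℚ) / 10 ^ k := by
  obtain ⟨a, rfl | rfl⟩ := e.eq_nat_or_neg
  · refine ⟨10 ^ a * M, s, ?_⟩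
    push_cast
    rw [zpow_natCast, mul_div_assoc]
  · refine ⟨M, s + a, ?_⟩
    rw [zpow_neg, zpow_natCast, pow_add]
    field_simp

lemma div_ten_pow_eq_two_pow_mul (N k t : ℕ) :
    (N : ℚ) / 10 ^ k = 2 ^ t * (((N * 5 ^ t : ℕ) : ℚ) / 10 ^ (k + t)) := by
  have h10 : (10 : ℚ) ^ t = 2 ^ t * 5 ^ t := by rw [← mul_pow]; norm_num
  push_cast
  rw [pow_add, h10]
  field_simp

lemma mul_five_pow_lt_ten_pow {N t : ℕ} (k : ℕ) (hN : N < 2 ^ t) :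
    N * 5 ^ t < 10 ^ (k + t) :=
  calc N * 5 ^ t < 2 ^ t * 5 ^ t := by gcongr
    _ = 10 ^ t := by rw [← mul_pow]; norm_num
    _ ≤ 10 ^ (k + t) := Nat.pow_le_pow_right (by norm_num) (Nat.le_add_left t k)

theorem binarization_correct_general (e : ℤ) (M s : ℕ) :
    ∃ (e' : ℤ) (M' s' : ℕ), M' < 10 ^ s' ∧
      (10 : ℚ) ^ e * ((M : ℚ) / (10 : ℚ) ^ s) =
        (2 : ℚ) ^ e' * ((M' : ℚ) / (10 : ℚ) ^ s') := by
  obtain ⟨N, k, hx⟩ := exists_ten_zpow_mul_div_eq_div e M s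
  refine ⟨N, N * 5 ^ N, k + N, mul_five_pow_lt_ten_pow k N.lt_two_pow_self, ?_⟩
  rw [hx, zpow_natCast]
  exact div_ten_pow_eq_two_pow_mul N k N

theorem binarization_correct (e : ℤ) (M s : ℕ) (hM : M < 10 ^ s) :
    ∃ (e' : ℤ) (M' s' : ℕ), M' < 10 ^ s' ∧
      (10 : ℚ) ^ e * ((M : ℚ) / (10 : ℚ) ^ s) =
        (2 : ℚ) ^ e' * ((M' : ℚ) / (10 : ℚ) ^ s') :=
  binarization_correct_general e M s
end
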